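/- arXiv:2211.05185 — 2 statements merged into one kernel-verified Lean document; each statement's English description precedes it below -/
import Mathlib

section
/- Let Γ : D^m → D^n be non-expansive and let I ⊆ D^m be a finite set of pairwise isometric points. If ε_β ≥ 0 for each β ∈ I and ‖∑_{β∈I} ε_β Γ(β)‖ = 1, then ‖∑_{β∈I} ε_β β‖ = 1 and Γ(∑_{β∈I} ε_β β) = ∑_{β∈I} ε_β Γ(β). -/
/-!
Write `s = ∑ ε_β β` and `t = ∑ ε_β Γ(β)`. Since `Γ` preserves the inner products of points of `I`,
`‖s‖ = ‖t‖ = 1`. Between vectors of equal norms, a map that does not increase distances does not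
decrease inner products, so `1 = ⟪s, s⟫ = ∑ ε_β ⟪s, β⟫ ≤ ∑ ε_β ⟪Γ s, Γ β⟫ = ⟪Γ s, t⟫ ≤ 1`,
and the equality case of Cauchy–Schwarz for unit vectors gives `Γ s = t`.
-/

open scoped RealInnerProductSpace

section

variable {E F : Type*} [NormedAddCommGroup E] [InnerProductSpace ℝ E]
  [NormedAddCommGroup F] [InnerProductSpace ℝ F]

theorem norm_sum_smul_map_eq_of_inner_map_eq {ι : Type*} (I : Finset ι) (x : ι → E) (y : ι → F)
    (hiso : ∀ i ∈ I, ∀ j ∈ I, ⟪y i, y j⟫ = ⟪x i, x j⟫) (ε : ι → ℝ) :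
    ‖∑ i ∈ I, ε i • y i‖ = ‖∑ i ∈ I, ε i • x i‖ := by
  have hinner : ⟪∑ i ∈ I, ε i • y i, ∑ i ∈ I, ε i • y i⟫ =
      ⟪∑ i ∈ I, ε i • x i, ∑ i ∈ I, ε i • x i⟫ := by
    simp only [sum_inner, inner_sum, real_inner_smul_left, real_inner_smul_right]
    exact Finset.sum_congr rfl fun i hi => Finset.sum_congr rfl fun j hj => by rw [hiso j hj i hi]
  rw [real_inner_self_eq_norm_sq, real_inner_self_eq_norm_sq] at hinner
  exact (pow_left_inj₀ (norm_nonneg _) (norm_nonneg _) two_ne_zero).mp hinner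

theorem real_inner_le_real_inner_of_norm_sub_le {x y : E} {u v : F} (hu : ‖u‖ = ‖x‖)
    (hv : ‖v‖ = ‖y‖) (h : ‖u - v‖ ≤ ‖x - y‖) : ⟪x, y⟫ ≤ ⟪u, v⟫ := by
  have hsq : ‖u - v‖ ^ 2 ≤ ‖x - y‖ ^ 2 := pow_le_pow_left₀ (norm_nonneg _) h 2
  rw [norm_sub_sq_real, norm_sub_sq_real, hu, hv] at hsq
  linarith

theorem real_inner_sum_smul_le {ι : Type*} (I : Finset ι) (x : ι → E) (y : ι → F) {a : E}
    {b : F} (h : ∀ i ∈ I, ⟪a, x i⟫ ≤ ⟪b, y i⟫) (ε : ι → ℝ) (hε : ∀ i ∈ I, 0 ≤ ε i) :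
    ⟪a, ∑ i ∈ I, ε i • x i⟫ ≤ ⟪b, ∑ i ∈ I, ε i • y i⟫ := by
  simp only [inner_sum, real_inner_smul_right]
  exact Finset.sum_le_sum fun i hi => mul_le_mul_of_nonneg_left (h i hi) (hε i hi)

end

theorem stmt4 (n m : ℕ)
    (Γ : EuclideanSpace ℝ (Fin m) → EuclideanSpace ℝ (Fin n))
    (hΓ : ∀ β : EuclideanSpace ℝ (Fin m), ‖β‖ = 1 → ‖Γ β‖ = 1)
    (hne : ∀ β β' : EuclideanSpace ℝ (Fin m), ‖β‖ = 1 → ‖β'‖ = 1 →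
      ‖Γ β - Γ β'‖ ≤ ‖β - β'‖)
    (I : Finset (EuclideanSpace ℝ (Fin m)))
    (hI : ∀ β ∈ I, ‖β‖ = 1)
    (hiso : ∀ β ∈ I, ∀ β' ∈ I, ⟪Γ β, Γ β'⟫ = ⟪β, β'⟫)
    (ε : EuclideanSpace ℝ (Fin m) → ℝ) (hε : ∀ β ∈ I, 0 ≤ ε β)
    (hsum : ‖∑ β ∈ I, ε β • Γ β‖ = 1) :
    ‖∑ β ∈ I, ε β • β‖ = 1 ∧
    Γ (∑ β ∈ I, ε β • β) = ∑ β ∈ I, ε β • Γ β := by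
  set s := ∑ β ∈ I, ε β • β
  set t := ∑ β ∈ I, ε β • Γ β
  have hs : ‖s‖ = 1 := by
    rw [← hsum]
    exact (norm_sum_smul_map_eq_of_inner_map_eq I id Γ hiso ε).symm
  have hΓs : ‖Γ s‖ = 1 := hΓ s hs
  have hmono : ∀ β ∈ I, ⟪s, β⟫ ≤ ⟪Γ s, Γ β⟫ := fun β hβ =>
    real_inner_le_real_inner_of_norm_sub_le (hΓs.trans hs.symm)
      ((hΓ β (hI β hβ)).trans (hI β hβ).symm) (hne s β hs (hI β hβ))
  have hlower : 1 ≤ ⟪Γ s, t⟫ := by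
    calc (1 : ℝ) = ⟪s, s⟫ := by rw [real_inner_self_eq_norm_sq, hs, one_pow]
      _ ≤ ⟪Γ s, t⟫ := real_inner_sum_smul_le I id Γ hmono ε hε
  have hupper : ⟪Γ s, t⟫ ≤ 1 := by
    simpa [hΓs, hsum] using real_inner_le_norm (Γ s) t
  exact ⟨hs, (inner_eq_one_iff_of_norm_eq_one hΓs hsum).mp (le_antisymm hupper hlower)⟩
end

section
/- Let Γ : D^m → D^n be non-expansive and suppose there is a finite set I ⊆ D^m such that for every β̄ ∈ D^m there exists J ⊆ I of pairwise isometric points with β̄ ∈ cone(J). Then C_Γ = {(x,y) : Γ(β)ᵀx − βᵀy ≥ 0 for all β ∈ I}; in particular C_Γ is a polyhedron. -/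
/-!
Write a unit vector `β` as a nonnegative combination `∑ c_b b` of pairwise isometric points
of `I`. The vector `v = ∑ c_b Γ(b)` has the same norm as `β`, namely `1`, since the two
families have the same Gram matrix. Non-expansiveness of `Γ` on the sphere means that `Γ` can
only increase inner products, so `⟪Γ β, v⟫ ≥ ⟪β, β⟫ = 1`, and the equality case of
Cauchy–Schwarz forces `Γ β = v`. Hence the constraint of `C_Γ` indexed by `β` is the same
nonnegative combination of the constraints indexed by the points `b ∈ I`.
-/

open scoped RealInnerProductSpace

section

variable {E F : Type*} [NormedAddCommGroup E] [InnerProductSpace ℝ E]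
  [NormedAddCommGroup F] [InnerProductSpace ℝ F]

theorem real_inner_le_inner_of_norm_sub_le {x y : E} {x' y' : F}
    (hx : ‖x'‖ = ‖x‖) (hy : ‖y'‖ = ‖y‖) (h : ‖x' - y'‖ ≤ ‖x - y‖) :
    ⟪x, y⟫ ≤ ⟪x', y'⟫ := by
  have hsq : ‖x' - y'‖ ^ 2 ≤ ‖x - y‖ ^ 2 := pow_le_pow_left₀ (norm_nonneg _) h 2
  rw [norm_sub_sq_real, norm_sub_sq_real, hx, hy] at hsq
  linarith

theorem norm_sum_smul_eq_of_inner_eq {ι : Type*} {J : Finset ι} {u : ι → E} {w : ι → F}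
    (hgram : ∀ i ∈ J, ∀ j ∈ J, ⟪w i, w j⟫ = ⟪u i, u j⟫) (c : ι → ℝ) :
    ‖∑ i ∈ J, c i • w i‖ = ‖∑ i ∈ J, c i • u i‖ := by
  have hinner : ⟪∑ i ∈ J, c i • w i, ∑ i ∈ J, c i • w i⟫ =
      ⟪∑ i ∈ J, c i • u i, ∑ i ∈ J, c i • u i⟫ := by
    simp only [sum_inner, inner_sum, real_inner_smul_left, real_inner_smul_right]
    exact Finset.sum_congr rfl fun i hi => Finset.sum_congr rfl fun j hj => by rw [hgram j hj i hi]
  rw [real_inner_self_eq_norm_sq, real_inner_self_eq_norm_sq] at hinner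
  exact (sq_eq_sq₀ (norm_nonneg _) (norm_nonneg _)).1 hinner

theorem eq_of_norm_eq_one_of_one_le_inner {x y : E} (hx : ‖x‖ = 1) (hy : ‖y‖ = 1)
    (h : 1 ≤ ⟪x, y⟫) : x = y := by
  have hle : ⟪x, y⟫ ≤ 1 := by simpa [hx, hy] using real_inner_le_norm x y
  exact (inner_eq_one_iff_of_norm_eq_one hx hy).1 (le_antisymm hle h)

theorem apply_eq_sum_smul_of_isometric {Γ : E → F}
    (hΓ : ∀ β : E, ‖β‖ = 1 → ‖Γ β‖ = 1)
    (hne : ∀ β β' : E, ‖β‖ = 1 → ‖β'‖ = 1 → ‖Γ β - Γ β'‖ ≤ ‖β - β'‖)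
    {J : Finset E} (hJ : ∀ b ∈ J, ‖b‖ = 1) (hiso : ∀ b ∈ J, ∀ b' ∈ J, ⟪Γ b, Γ b'⟫ = ⟪b, b'⟫)
    {c : E → ℝ} (hc : ∀ b ∈ J, 0 ≤ c b) {β : E} (hβ : ‖β‖ = 1) (hβJ : β = ∑ b ∈ J, c b • b) :
    Γ β = ∑ b ∈ J, c b • Γ b := by
  have hv : ‖∑ b ∈ J, c b • Γ b‖ = 1 := by
    rw [norm_sum_smul_eq_of_inner_eq hiso c, ← hβJ, hβ]
  have hinner_le : ∀ b ∈ J, ⟪β, b⟫ ≤ ⟪Γ β, Γ b⟫ := fun b hb =>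
    real_inner_le_inner_of_norm_sub_le (by rw [hΓ β hβ, hβ]) (by rw [hΓ b (hJ b hb), hJ b hb])
      (hne β b hβ (hJ b hb))
  refine eq_of_norm_eq_one_of_one_le_inner (hΓ β hβ) hv ?_
  calc (1 : ℝ) = ⟪β, ∑ b ∈ J, c b • b⟫ := by rw [← hβJ, real_inner_self_eq_norm_sq, hβ, one_pow]
    _ = ∑ b ∈ J, c b * ⟪β, b⟫ := by simp only [inner_sum, real_inner_smul_right]
    _ ≤ ∑ b ∈ J, c b * ⟪Γ β, Γ b⟫ :=
      Finset.sum_le_sum fun b hb => mul_le_mul_of_nonneg_left (hinner_le b hb) (hc b hb)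
    _ = ⟪Γ β, ∑ b ∈ J, c b • Γ b⟫ := by simp only [inner_sum, real_inner_smul_right]

end

theorem stmt19 (n m : ℕ)
    (Γ : EuclideanSpace ℝ (Fin m) → EuclideanSpace ℝ (Fin n))
    (hΓ : ∀ β : EuclideanSpace ℝ (Fin m), ‖β‖ = 1 → ‖Γ β‖ = 1)
    (hne : ∀ β β' : EuclideanSpace ℝ (Fin m), ‖β‖ = 1 → ‖β'‖ = 1 →
      ‖Γ β - Γ β'‖ ≤ ‖β - β'‖)
    (I : Finset (EuclideanSpace ℝ (Fin m)))
    (hI : ∀ β ∈ I, ‖β‖ = 1)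
    (hcover : ∀ βbar : EuclideanSpace ℝ (Fin m), ‖βbar‖ = 1 →
      ∃ J : Finset (EuclideanSpace ℝ (Fin m)), J ⊆ I ∧
        (∀ β ∈ J, ∀ β' ∈ J, ⟪Γ β, Γ β'⟫ = ⟪β, β'⟫) ∧
        ∃ c : EuclideanSpace ℝ (Fin m) → ℝ,
          (∀ β ∈ J, 0 ≤ c β) ∧ βbar = ∑ β ∈ J, c β • β)
    (C : Set (EuclideanSpace ℝ (Fin n) × EuclideanSpace ℝ (Fin m)))
    (hC : C = {p | ∀ β : EuclideanSpace ℝ (Fin m), ‖β‖ = 1 →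
      0 ≤ ⟪Γ β, p.1⟫ - ⟪β, p.2⟫}) :
    C = {p | ∀ β ∈ I, 0 ≤ ⟪Γ β, p.1⟫ - ⟪β, p.2⟫} := by
  subst hC
  ext p
  refine ⟨fun h β hβI => h β (hI β hβI), fun h β hβ => ?_⟩
  obtain ⟨J, hJI, hiso, c, hc, hβJ⟩ := hcover β hβ
  have hΓβ := apply_eq_sum_smul_of_isometric hΓ hne (fun b hb => hI b (hJI hb)) hiso hc hβ hβJ
  have hsplit : ⟪Γ β, p.1⟫ - ⟪β, p.2⟫ = ∑ b ∈ J, c b * (⟪Γ b, p.1⟫ - ⟪b, p.2⟫) := by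
    rw [hΓβ, hβJ, sum_inner, sum_inner, ← Finset.sum_sub_distrib]
    simp only [real_inner_smul_left, mul_sub]
  rw [hsplit]
  exact Finset.sum_nonneg fun b hb => mul_nonneg (hc b hb) (h b (hJI hb))
end
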